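/- arXiv:1401.3559 — 2 statements merged into one kernel-verified Lean document; each statement's English description precedes it below -/
import Mathlib

section
/- If π : ℝ → (0,∞) is log-Lipschitz with constant L, i.e. |log π(y) − log π(x)| ≤ L|y−x| for all x,y, and ∫ℝ π(x) dx = 1, then for every positive integer m, ∑_{i∈ℤ} π(i/m) ≤ m·e^{L/m}. -/
/-!
On the cell `(i/m, (i+1)/m]`, of length `1/m`, log-Lipschitz continuity gives
`π ≥ π(i/m) e^{-L/m}`, so `π(i/m) ≤ m e^{L/m} ∫_cell π`. The cells partition `ℝ`, so summing
over `i` bounds the lattice sum by `m e^{L/m} ∫ π`; summability comes from the same comparison.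
-/

open MeasureTheory Set

theorem hasSum_setIntegral_Ioc_intCast_mul {E : Type*} [NormedAddCommGroup E] [NormedSpace ℝ E]
    {μ : Measure ℝ} {f : ℝ → E} (hf : Integrable f μ) {h : ℝ} (hh : 0 < h) :
    HasSum (fun i : ℤ => ∫ x in Ioc (i * h) ((i + 1) * h), f x ∂μ) (∫ x, f x ∂μ) := by
  have hcells : ∀ i : ℤ, Ioc (i • h) ((i + 1) • h) = Ioc (i * h) ((i + 1) * h) := by
    intro i
    simp only [zsmul_eq_mul, Int.cast_add, Int.cast_one]
  have := hasSum_integral_iUnion (fun _ => measurableSet_Ioc) (pairwise_disjoint_Ioc_zsmul h)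
    hf.integrableOn
  rw [iUnion_Ioc_zsmul hh, setIntegral_univ] at this
  simpa only [hcells] using this

section LogLipschitz

variable {f : ℝ → ℝ} {L : ℝ} (hf_pos : ∀ x, 0 < f x)
  (hf_lip : ∀ x y : ℝ, |Real.log (f y) - Real.log (f x)| ≤ L * |y - x|)
include hf_pos hf_lip

theorem le_mul_exp_of_abs_log_sub_le (x y : ℝ) : f y ≤ f x * Real.exp (L * |y - x|) := by
  have hlog : Real.log (f y) ≤ Real.log (f x) + L * |y - x| := by
    linarith [le_abs_self (Real.log (f y) - Real.log (f x)), hf_lip x y]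
  calc f y = Real.exp (Real.log (f y)) := (Real.exp_log (hf_pos y)).symm
    _ ≤ Real.exp (Real.log (f x) + L * |y - x|) := Real.exp_le_exp.mpr hlog
    _ = f x * Real.exp (L * |y - x|) := by rw [Real.exp_add, Real.exp_log (hf_pos x)]

omit hf_pos in
theorem nonneg_of_abs_log_sub_le : 0 ≤ L := by
  simpa using (abs_nonneg _).trans (hf_lip 0 1)

theorem mul_sub_le_exp_mul_setIntegral_Ioc {a b : ℝ} (hab : a ≤ b)
    (hf_int : IntegrableOn f (Ioc a b)) :
    f a * (b - a) ≤ Real.exp (L * (b - a)) * ∫ x in Ioc a b, f x := by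
  have hL := nonneg_of_abs_log_sub_le hf_lip
  have hlower : ∀ x ∈ Ioc a b, f a * (Real.exp (L * (b - a)))⁻¹ ≤ f x := fun x hx => by
    have hdist : |a - x| ≤ b - a := by
      rw [abs_sub_comm, abs_of_pos (sub_pos.mpr hx.1)]
      linarith [hx.2]
    rw [mul_inv_le_iff₀ (Real.exp_pos _)]
    calc f a ≤ f x * Real.exp (L * |a - x|) := le_mul_exp_of_abs_log_sub_le hf_pos hf_lip x a
      _ ≤ f x * Real.exp (L * (b - a)) := by gcongr; exact (hf_pos x).le
  have := setIntegral_ge_of_const_le_real measurableSet_Ioc measure_Ioc_lt_top.ne hlower hf_int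
  rw [Real.volume_real_Ioc_of_le hab] at this
  calc f a * (b - a) = Real.exp (L * (b - a)) * (f a * (Real.exp (L * (b - a)))⁻¹ * (b - a)) := by
        field_simp
    _ ≤ Real.exp (L * (b - a)) * ∫ x in Ioc a b, f x := by gcongr

theorem mul_tsum_le_exp_mul_integral (hf_int : Integrable f) {h : ℝ} (hh : 0 < h) :
    h * ∑' i : ℤ, f (i * h) ≤ Real.exp (L * h) * ∫ x, f x := by
  have hcell (i : ℤ) :
      h * f (i * h) ≤ Real.exp (L * h) * ∫ x in Ioc (i * h) ((i + 1) * h), f x := by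
    have := mul_sub_le_exp_mul_setIntegral_Ioc hf_pos hf_lip
      (a := i * h) (b := (i + 1) * h) (by nlinarith) hf_int.integrableOn
    rwa [show ((i : ℝ) + 1) * h - i * h = h by ring, mul_comm] at this
  have hsum := (hasSum_setIntegral_Ioc_intCast_mul hf_int hh).mul_left (Real.exp (L * h))
  have hsummable : Summable fun i : ℤ => h * f (i * h) :=
    .of_nonneg_of_le (fun i => (mul_pos hh (hf_pos _)).le) hcell hsum.summable
  rw [← tsum_mul_left]
  exact hasSum_le hcell hsummable.hasSum hsum

end LogLipschitz

/-- If π is positive, log-Lipschitz with constant L, and integrates to 1 over ℝ,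
then for every positive integer m, ∑_{i∈ℤ} π(i/m) ≤ m·e^{L/m}. -/
theorem lattice_sum_bound (π : ℝ → ℝ) (L : ℝ)
    (hpos : ∀ x, 0 < π x)
    (hlip : ∀ x y : ℝ, |Real.log (π y) - Real.log (π x)| ≤ L * |y - x|)
    (hint : ∫ x : ℝ, π x = 1)
    (m : ℕ) (hm : 0 < m) :
    ∑' i : ℤ, π ((i : ℝ) / m) ≤ m * Real.exp (L / m) := by
  have hm' : (0 : ℝ) < m := Nat.cast_pos.mpr hm
  have := mul_tsum_le_exp_mul_integral hpos hlip (integrable_of_integral_eq_one hint)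
    (inv_pos.mpr hm')
  rw [hint, mul_one, inv_mul_le_iff₀ hm'] at this
  simpa only [div_eq_mul_inv] using this
end

section
/- Consider the function a(ℓ) = 2ℓ²Φ(−ℓ√I/2) for ℓ > 0 and fixed I > 0, where Φ is the standard normal CDF. Then a attains a unique maximum at the value ℓ* satisfying the first-order condition 2ℓΦ(−ℓ√I/2) = (ℓ²√I/2)φ(ℓ√I/2) (with φ the standard normal density), and at this maximizer the quantity 2Φ(−ℓ*√I/2) (the asymptotic acceptance rate) is a constant ≈ 0.2338 independent of I. -/
/-!
With `u = ℓ √I` the speed `2ℓ²Φ(-ℓ√I/2)` is `I⁻¹ g(u)` for `g(u) = 2u²Φ(-u/2)`, so everything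
reduces to `g`, and `ℓ* = u*/√I` for the maximiser `u*` of `g`. With the Mills ratio
`M(s) = Φ(-s)/φ(s)` one has `g'(u) = u φ(u/2) (4M(u/2) - u)`, and Mills' inequality
`sΦ(-s) ≤ φ(s)` says exactly that `M' = sM - 1 ≤ 0`. Hence `4M(u/2) - u` is strictly decreasing,
`g` increases up to its unique zero `u*` and decreases afterwards. Integrating seven terms of the
Taylor series of `exp(-t²/2)` locates `u* ∈ (2.38, 2.384)`, which pins the acceptance rate
`2Φ(-u*/2)` between `0.2328` and `0.2348`.
-/

open ProbabilityTheory

noncomputable def stdNormalCDF (x : ℝ) : ℝ :=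
  ∫ t in Set.Iic x, ProbabilityTheory.gaussianPDFReal 0 1 t

open MeasureTheory Real Set Filter Topology

local notation "φ" => gaussianPDFReal 0 1
local notation "Φ" => stdNormalCDF

lemma gaussianPDFReal_zero_one_apply (x : ℝ) :
    φ x = (√(2 * π))⁻¹ * exp (-(x ^ 2 / 2)) := by
  simp [gaussianPDFReal, neg_div]

lemma gaussianPDFReal_zero_one_neg (x : ℝ) : φ (-x) = φ x := by
  simp [gaussianPDFReal_zero_one_apply]

lemma hasDerivAt_gaussianPDFReal_zero_one (x : ℝ) : HasDerivAt φ (-x * φ x) x := by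
  have h : HasDerivAt (fun y => -(y ^ 2 / 2)) (-x) x := by
    simpa using ((hasDerivAt_pow 2 x).div_const 2).fun_neg
  rw [funext gaussianPDFReal_zero_one_apply]
  exact (h.exp.const_mul _).congr_deriv (by ring)

lemma continuous_gaussianPDFReal_zero_one : Continuous φ :=
  continuous_iff_continuousAt.2 fun x => (hasDerivAt_gaussianPDFReal_zero_one x).continuousAt

lemma tendsto_gaussianPDFReal_zero_one_atTop : Tendsto φ atTop (𝓝 0) := by
  rw [funext gaussianPDFReal_zero_one_apply, ← mul_zero (√(2 * π))⁻¹]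
  refine (tendsto_exp_atBot.comp ?_).const_mul _
  exact tendsto_neg_atTop_atBot.comp ((tendsto_pow_atTop two_ne_zero).atTop_div_const two_pos)

lemma integrable_mul_gaussianPDFReal_zero_one : Integrable fun t => t * φ t := by
  refine ((integrable_mul_exp_neg_mul_sq one_half_pos).const_mul (√(2 * π))⁻¹).congr
    (Eventually.of_forall fun t => ?_)
  simp only [gaussianPDFReal_zero_one_apply, neg_mul, one_div, ← div_eq_inv_mul]
  ring

lemma integral_Ioi_mul_gaussianPDFReal_zero_one (s : ℝ) : ∫ t in Ioi s, t * φ t = φ s := by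
  have h := integral_Ioi_of_hasDerivAt_of_tendsto' (f := fun t => -φ t) (a := s) (m := 0)
    (fun x _ => (hasDerivAt_gaussianPDFReal_zero_one x).neg)
    (by simpa using integrable_mul_gaussianPDFReal_zero_one.integrableOn)
    (by simpa using tendsto_gaussianPDFReal_zero_one_atTop.neg)
  simpa using h

lemma stdNormalCDF_neg (s : ℝ) : Φ (-s) = ∫ t in Ioi s, φ t := by
  rw [stdNormalCDF, ← neg_neg s, ← integral_comp_neg_Iic, neg_neg]
  simp only [gaussianPDFReal_zero_one_neg]

lemma stdNormalCDF_neg_eq_one_sub (s : ℝ) : Φ (-s) = 1 - Φ s := by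
  have h := integral_add_compl (measurableSet_Iic (a := s)) (integrable_gaussianPDFReal 0 1)
  rw [compl_Iic, integral_gaussianPDFReal_eq_one 0 one_ne_zero, ← stdNormalCDF,
    ← stdNormalCDF_neg] at h
  linarith

lemma stdNormalCDF_zero : Φ 0 = 1 / 2 := by
  have h := stdNormalCDF_neg_eq_one_sub 0
  rw [neg_zero] at h
  linarith

lemma stdNormalCDF_eq_half_add (x : ℝ) : Φ x = 1 / 2 + ∫ t in (0 : ℝ)..x, φ t := by
  have h := intervalIntegral.integral_Iic_sub_Iic (integrable_gaussianPDFReal 0 1).integrableOn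
    (integrable_gaussianPDFReal 0 1).integrableOn (a := 0) (b := x)
  rw [← stdNormalCDF, ← stdNormalCDF, stdNormalCDF_zero] at h
  linarith

lemma hasDerivAt_stdNormalCDF (x : ℝ) : HasDerivAt Φ (φ x) x := by
  rw [funext stdNormalCDF_eq_half_add]
  exact (continuous_gaussianPDFReal_zero_one.integral_hasStrictDerivAt 0 x).hasDerivAt.const_add _

lemma strictMono_stdNormalCDF : StrictMono Φ :=
  strictMono_of_hasDerivAt_pos hasDerivAt_stdNormalCDF (gaussianPDFReal_pos 0 1 · one_ne_zero)

lemma mul_stdNormalCDF_neg_le (s : ℝ) : s * Φ (-s) ≤ φ s := by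
  rw [stdNormalCDF_neg, ← integral_const_mul, ← integral_Ioi_mul_gaussianPDFReal_zero_one s]
  refine setIntegral_mono_on ((integrable_gaussianPDFReal 0 1).integrableOn.const_mul s)
    integrable_mul_gaussianPDFReal_zero_one.integrableOn measurableSet_Ioi fun t ht => ?_
  exact mul_le_mul_of_nonneg_right (le_of_lt ht) (gaussianPDFReal_nonneg 0 1 t)

noncomputable def millsRatio (s : ℝ) : ℝ := Φ (-s) / φ s

lemma hasDerivAt_millsRatio (s : ℝ) : HasDerivAt millsRatio (s * millsRatio s - 1) s := by
  have hΦ : HasDerivAt (fun s => Φ (-s)) (φ (-s) * -1) s :=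
    (hasDerivAt_stdNormalCDF (-s)).comp s (hasDerivAt_neg s)
  have hφ := (gaussianPDFReal_pos 0 1 s one_ne_zero).ne'
  refine (hΦ.div (hasDerivAt_gaussianPDFReal_zero_one s) hφ).congr_deriv ?_
  rw [millsRatio, gaussianPDFReal_zero_one_neg]
  field_simp
  ring

lemma continuous_millsRatio : Continuous millsRatio :=
  continuous_iff_continuousAt.2 fun s => (hasDerivAt_millsRatio s).continuousAt

lemma antitone_millsRatio : Antitone millsRatio := by
  refine antitone_of_deriv_nonpos (fun s => (hasDerivAt_millsRatio s).differentiableAt) fun s => ?_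
  rw [(hasDerivAt_millsRatio s).deriv, sub_nonpos, millsRatio, mul_div_assoc',
    div_le_one (gaussianPDFReal_pos 0 1 s one_ne_zero)]
  exact mul_stdNormalCDF_neg_le s

lemma strictAnti_four_mul_millsRatio_half_sub : StrictAnti fun u => 4 * millsRatio (u / 2) - u :=
  fun u v huv => by
    have := antitone_millsRatio (div_le_div_of_nonneg_right huv.le zero_le_two)
    dsimp only
    linarith

noncomputable def diffusionSpeed (u : ℝ) : ℝ := 2 * u ^ 2 * Φ (-u / 2)

lemma hasDerivAt_diffusionSpeed (u : ℝ) :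
    HasDerivAt diffusionSpeed (u * φ (u / 2) * (4 * millsRatio (u / 2) - u)) u := by
  have hΦ : HasDerivAt (fun u => Φ (-u / 2)) (φ (-u / 2) * (-1 / 2)) u :=
    (hasDerivAt_stdNormalCDF (-u / 2)).comp (h₂ := Φ) (h := fun u => -u / 2) u
      ((hasDerivAt_neg u).div_const 2)
  have hφ := (gaussianPDFReal_pos 0 1 (u / 2) one_ne_zero).ne'
  refine (((hasDerivAt_pow 2 u).const_mul 2).mul hΦ).congr_deriv ?_
  rw [millsRatio, neg_div, gaussianPDFReal_zero_one_neg]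
  field_simp
  ring

lemma apply_lt_of_hasDerivAt_pos_of_neg {f f' : ℝ → ℝ} {a b x : ℝ}
    (hf : ∀ y, HasDerivAt f (f' y) y) (hpos : ∀ y ∈ Ioo a b, 0 < f' y)
    (hneg : ∀ y, b < y → f' y < 0) (hax : a ≤ x) (hxb : x ≠ b) : f x < f b := by
  have hcont : Continuous f := continuous_iff_continuousAt.2 fun y => (hf y).continuousAt
  rcases hxb.lt_or_gt with hlt | hgt
  · refine strictMonoOn_of_deriv_pos (convex_Icc a b) hcont.continuousOn (fun y hy => ?_)
      ⟨hax, hlt.le⟩ ⟨hax.trans hlt.le, le_rfl⟩ hlt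
    rw [interior_Icc] at hy
    exact (hf y).deriv ▸ hpos y hy
  · refine strictAntiOn_of_deriv_neg (convex_Ici b) hcont.continuousOn (fun y hy => ?_)
      self_mem_Ici hgt.le hgt
    rw [interior_Ici] at hy
    exact (hf y).deriv ▸ hneg y hy

lemma diffusionSpeed_lt_of_ne {u₀ u : ℝ} (hu₀ : 0 < u₀) (hcrit : 4 * millsRatio (u₀ / 2) = u₀)
    (hu : 0 ≤ u) (hne : u ≠ u₀) : diffusionSpeed u < diffusionSpeed u₀ := by
  have hfactor : ∀ y, 0 < y → 0 < y * φ (y / 2) := fun y hy =>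
    mul_pos hy (gaussianPDFReal_pos 0 1 _ one_ne_zero)
  refine apply_lt_of_hasDerivAt_pos_of_neg hasDerivAt_diffusionSpeed (fun y hy => ?_)
    (fun y hy => ?_) hu hne
  · refine mul_pos (hfactor y hy.1) ?_
    have := strictAnti_four_mul_millsRatio_half_sub hy.2
    simp only at this
    linarith
  · refine mul_neg_of_pos_of_neg (hfactor y (hu₀.trans hy)) ?_
    have := strictAnti_four_mul_millsRatio_half_sub hy
    simp only at this
    linarith

lemma diffusionSpeed_mul_sqrt {I : ℝ} (hI : 0 ≤ I) (ℓ : ℝ) :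
    diffusionSpeed (ℓ * √I) = I * (2 * ℓ ^ 2 * Φ (-(ℓ * √I) / 2)) := by
  rw [diffusionSpeed, mul_pow, sq_sqrt hI]
  ring

lemma abs_exp_neg_sq_half_sub_le {x : ℝ} (hx : x ^ 2 ≤ 2) {n : ℕ} (hn : 0 < n) :
    |exp (-(x ^ 2 / 2)) - ∑ m ∈ Finset.range n, (-(x ^ 2 / 2)) ^ m / m.factorial|
      ≤ (x ^ 2 / 2) ^ n * ((n + 1) / (n.factorial * n)) := by
  have hx' : |-(x ^ 2 / 2)| ≤ 1 := by
    rw [abs_neg, abs_of_nonneg (by positivity)]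
    linarith
  simpa [abs_of_nonneg (by positivity : 0 ≤ x ^ 2 / 2)] using Real.exp_bound hx' hn

lemma hasDerivAt_taylor_antideriv_exp_neg_sq_half (n : ℕ) (x : ℝ) :
    HasDerivAt (fun y : ℝ => ∑ m ∈ Finset.range n,
        (-1 / 2) ^ m * y ^ (2 * m + 1) / ((2 * m + 1) * m.factorial))
      (∑ m ∈ Finset.range n, (-(x ^ 2 / 2)) ^ m / m.factorial) x := by
  refine HasDerivAt.fun_sum fun m _ => ?_
  refine (((hasDerivAt_pow (2 * m + 1) x).const_mul _).div_const _).congr_deriv ?_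
  have : (2 * m + 1 : ℝ) ≠ 0 := by positivity
  rw [Nat.add_sub_cancel, pow_mul]
  push_cast
  field_simp
  ring

lemma abs_integral_exp_neg_sq_half_sub_le {x : ℝ} (hx₀ : 0 ≤ x) (hx : x ^ 2 ≤ 2) {n : ℕ}
    (hn : 0 < n) :
    |(∫ t in (0 : ℝ)..x, exp (-(t ^ 2 / 2))) - ∑ m ∈ Finset.range n,
        (-1 / 2) ^ m * x ^ (2 * m + 1) / ((2 * m + 1) * m.factorial)|
      ≤ x ^ (2 * n + 1) / ((2 * n + 1) * 2 ^ n) * ((n + 1) / (n.factorial * n)) := by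
  set C : ℝ := (n + 1) / (n.factorial * n)
  have htaylor : Continuous fun t : ℝ =>
      ∑ m ∈ Finset.range n, (-(t ^ 2 / 2)) ^ m / m.factorial := by fun_prop
  have hQ := intervalIntegral.integral_eq_sub_of_hasDerivAt
    (fun t _ => hasDerivAt_taylor_antideriv_exp_neg_sq_half n t) (htaylor.intervalIntegrable 0 x)
  rw [sub_eq_self.2 (Finset.sum_eq_zero fun m _ => by simp)] at hQ
  have hexp : Continuous fun t : ℝ => exp (-(t ^ 2 / 2)) := by fun_prop
  rw [← hQ, ← intervalIntegral.integral_sub (hexp.intervalIntegrable 0 x)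
    (htaylor.intervalIntegrable 0 x)]
  have hbound : ∀ t ∈ Ioc 0 x, ‖exp (-(t ^ 2 / 2))
      - ∑ m ∈ Finset.range n, (-(t ^ 2 / 2)) ^ m / m.factorial‖ ≤ C / 2 ^ n * t ^ (2 * n) :=
    fun t ht => by
      have ht2 : t ^ 2 ≤ 2 := le_trans (pow_le_pow_left₀ ht.1.le ht.2 2) hx
      refine (abs_exp_neg_sq_half_sub_le ht2 hn).trans_eq ?_
      rw [div_pow, ← pow_mul]
      ring
  have hmajorant : Continuous fun t : ℝ => C / 2 ^ n * t ^ (2 * n) := by fun_prop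
  refine (intervalIntegral.norm_integral_le_of_norm_le hx₀ (ae_of_all _ hbound)
    (hmajorant.intervalIntegrable 0 x)).trans_eq ?_
  rw [intervalIntegral.integral_const_mul, integral_pow]
  push_cast
  field_simp
  ring

lemma stdNormalCDF_neg_eq_half_sub (s : ℝ) :
    Φ (-s) = 1 / 2 - (∫ t in (0 : ℝ)..s, exp (-(t ^ 2 / 2))) / √(2 * π) := by
  rw [stdNormalCDF_neg_eq_one_sub, stdNormalCDF_eq_half_add]
  simp only [gaussianPDFReal_zero_one_apply, intervalIntegral.integral_const_mul]
  ring

lemma millsRatio_eq (s : ℝ) : millsRatio s =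
    (√(2 * π) / 2 - ∫ t in (0 : ℝ)..s, exp (-(t ^ 2 / 2))) / exp (-(s ^ 2 / 2)) := by
  have hπ : 0 < √(2 * π) := by positivity
  rw [millsRatio, stdNormalCDF_neg_eq_half_sub, gaussianPDFReal_zero_one_apply]
  field_simp

lemma sqrt_two_mul_pi_mem : 2.50662 < √(2 * π) ∧ √(2 * π) < 2.50663 := by
  constructor
  · rw [lt_sqrt (by norm_num)]
    linarith [pi_gt_d6]
  · rw [sqrt_lt' (by norm_num)]
    linarith [pi_lt_d6]

lemma four_mul_millsRatio_119_div_100_gt : 238 / 100 < 4 * millsRatio (119 / 100) := by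
  have hJ := abs_integral_exp_neg_sq_half_sub_le (x := 119 / 100) (by norm_num) (by norm_num)
    (n := 7) (by norm_num)
  have he := abs_exp_neg_sq_half_sub_le (x := 119 / 100) (by norm_num) (n := 7) (by norm_num)
  rw [millsRatio_eq, mul_div_assoc', lt_div_iff₀ (exp_pos _)]
  generalize exp (-((119 / 100 : ℝ) ^ 2 / 2)) = e at he ⊢
  generalize ∫ t in (0 : ℝ)..119 / 100, exp (-(t ^ 2 / 2)) = J at hJ ⊢
  norm_num [Finset.sum_range_succ, Nat.factorial, abs_le] at hJ he
  linarith [sqrt_two_mul_pi_mem.1]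

lemma four_mul_millsRatio_149_div_125_lt : 4 * millsRatio (149 / 125) < 298 / 125 := by
  have hJ := abs_integral_exp_neg_sq_half_sub_le (x := 149 / 125) (by norm_num) (by norm_num)
    (n := 7) (by norm_num)
  have he := abs_exp_neg_sq_half_sub_le (x := 149 / 125) (by norm_num) (n := 7) (by norm_num)
  rw [millsRatio_eq, mul_div_assoc', div_lt_iff₀ (exp_pos _)]
  generalize exp (-((149 / 125 : ℝ) ^ 2 / 2)) = e at he ⊢
  generalize ∫ t in (0 : ℝ)..149 / 125, exp (-(t ^ 2 / 2)) = J at hJ ⊢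
  norm_num [Finset.sum_range_succ, Nat.factorial, abs_le] at hJ he
  linarith [sqrt_two_mul_pi_mem.2]

lemma two_mul_stdNormalCDF_neg_149_div_125_gt : 0.2328 < 2 * Φ (-(149 / 125)) := by
  have hJ := abs_integral_exp_neg_sq_half_sub_le (x := 149 / 125) (by norm_num) (by norm_num)
    (n := 7) (by norm_num)
  have hπ := sqrt_two_mul_pi_mem
  rw [stdNormalCDF_neg_eq_half_sub]
  generalize ∫ t in (0 : ℝ)..149 / 125, exp (-(t ^ 2 / 2)) = J at hJ ⊢
  norm_num [Finset.sum_range_succ, Nat.factorial, abs_le] at hJ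
  have : J / √(2 * π) < 0.3836 := (div_lt_iff₀ (by linarith)).2 (by linarith)
  linarith

lemma two_mul_stdNormalCDF_neg_119_div_100_lt : 2 * Φ (-(119 / 100)) < 0.2348 := by
  have hJ := abs_integral_exp_neg_sq_half_sub_le (x := 119 / 100) (by norm_num) (by norm_num)
    (n := 7) (by norm_num)
  have hπ := sqrt_two_mul_pi_mem
  rw [stdNormalCDF_neg_eq_half_sub]
  generalize ∫ t in (0 : ℝ)..119 / 100, exp (-(t ^ 2 / 2)) = J at hJ ⊢
  norm_num [Finset.sum_range_succ, Nat.factorial, abs_le] at hJ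
  have : 0.3826 < J / √(2 * π) := (lt_div_iff₀ (by linarith)).2 (by linarith)
  linarith

lemma abs_two_mul_stdNormalCDF_neg_sub_lt {s : ℝ} (h₁ : 119 / 100 < s) (h₂ : s < 149 / 125) :
    |2 * Φ (-s) - 0.2338| < 0.001 := by
  have hlo := strictMono_stdNormalCDF (neg_lt_neg h₂)
  have hhi := strictMono_stdNormalCDF (neg_lt_neg h₁)
  rw [abs_sub_lt_iff]
  constructor <;>
    linarith [two_mul_stdNormalCDF_neg_149_div_125_gt, two_mul_stdNormalCDF_neg_119_div_100_lt]

lemma exists_four_mul_millsRatio_half_eq :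
    ∃ u ∈ Ioo (238 / 100 : ℝ) (298 / 125), 4 * millsRatio (u / 2) = u := by
  have hcont : ContinuousOn (fun u => 4 * millsRatio (u / 2) - u) (Icc (238 / 100) (298 / 125)) :=
    (continuous_millsRatio.comp (continuous_id.div_const 2)).const_mul 4 |>.sub continuous_id
      |>.continuousOn
  have hb : 4 * millsRatio ((298 / 125 : ℝ) / 2) - 298 / 125 < 0 := by
    norm_num
    linarith [four_mul_millsRatio_149_div_125_lt]
  have ha : 0 < 4 * millsRatio ((238 / 100 : ℝ) / 2) - 238 / 100 := by
    norm_num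
    linarith [four_mul_millsRatio_119_div_100_gt]
  obtain ⟨u, hu, hzero⟩ := intermediate_value_Ioo' (by norm_num) hcont ⟨hb, ha⟩
  exact ⟨u, hu, sub_eq_zero.1 hzero⟩

/-- For each I > 0, the diffusion speed a(ℓ) = 2ℓ²Φ(−ℓ√I/2) attains a unique maximum
over ℓ > 0 at a point ℓ* satisfying the first-order condition
2ℓΦ(−ℓ√I/2) = (ℓ²√I/2)φ(ℓ√I/2), and the induced asymptotic acceptance rate
2Φ(−ℓ*√I/2) is a constant ≈ 0.2338 independent of I. -/
theorem tempering_optimal_acceptance_rate :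
    ∃ c : ℝ, |c - 0.2338| < 0.001 ∧
      ∀ I : ℝ, 0 < I →
        ∃ ℓs : ℝ, 0 < ℓs ∧
          (∀ ℓ : ℝ, 0 < ℓ →
            2 * ℓ ^ 2 * stdNormalCDF (-(ℓ * Real.sqrt I) / 2)
              ≤ 2 * ℓs ^ 2 * stdNormalCDF (-(ℓs * Real.sqrt I) / 2)) ∧
          (∀ ℓ' : ℝ, 0 < ℓ' →
            (∀ ℓ : ℝ, 0 < ℓ →
              2 * ℓ ^ 2 * stdNormalCDF (-(ℓ * Real.sqrt I) / 2)
                ≤ 2 * ℓ' ^ 2 * stdNormalCDF (-(ℓ' * Real.sqrt I) / 2)) → ℓ' = ℓs) ∧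
          2 * ℓs * stdNormalCDF (-(ℓs * Real.sqrt I) / 2)
            = (ℓs ^ 2 * Real.sqrt I / 2) * gaussianPDFReal 0 1 (ℓs * Real.sqrt I / 2) ∧
          2 * stdNormalCDF (-(ℓs * Real.sqrt I) / 2) = c := by
  obtain ⟨u₀, ⟨hlo, hhi⟩, hcrit⟩ := exists_four_mul_millsRatio_half_eq
  have hu₀ : 0 < u₀ := by linarith
  refine ⟨2 * Φ (-u₀ / 2), neg_div (2 : ℝ) u₀ ▸
    abs_two_mul_stdNormalCDF_neg_sub_lt (by linarith) (by linarith), fun I hI => ?_⟩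
  have hr : 0 < √I := sqrt_pos.2 hI
  have hℓ₀ : u₀ / √I * √I = u₀ := div_mul_cancel₀ _ hr.ne'
  have hscale := diffusionSpeed_mul_sqrt hI.le
  refine ⟨u₀ / √I, by positivity, fun ℓ hℓ => ?_, fun ℓ' hℓ' hmax => ?_, ?_, by rw [hℓ₀]⟩
  · have h : diffusionSpeed (ℓ * √I) ≤ diffusionSpeed u₀ :=
      (eq_or_ne (ℓ * √I) u₀).elim (fun h => h ▸ le_rfl)
        fun h => (diffusionSpeed_lt_of_ne hu₀ hcrit (by positivity) h).le
    rw [hscale, ← hℓ₀, hscale] at h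
    exact le_of_mul_le_mul_left h hI
  · have h := mul_le_mul_of_nonneg_left (hmax (u₀ / √I) (by positivity)) hI.le
    rw [← hscale, ← hscale, hℓ₀] at h
    by_contra hne
    exact (diffusionSpeed_lt_of_ne hu₀ hcrit (by positivity)
      fun h' => hne (eq_div_of_mul_eq hr.ne' h')).not_ge h
  · rw [millsRatio, mul_div_assoc',
      div_eq_iff (gaussianPDFReal_pos 0 1 _ one_ne_zero).ne'] at hcrit
    rw [hℓ₀, neg_div]
    field_simp
    linear_combination hcrit
end
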